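/- Assume z ≥ 1 and w ≥ 1 (i.e., W ≠ ∅) and q' = q_{u−z} = 0. Let h_1 ≥ 0, s_1 ∈ [1,p], and d_1 ∈ [0, υ−1] be integers. Then there exist an integer h ≥ h_1 and a pair (s,d) ∈ V∖W such that h_1·m_0 + m_{s_1} + d_1·m_n = h·m_0 + g_s + d·m_n. -/

import Mathlib

/-- For `t ≥ 1`, the quotient `q_t` in the division `t = q_t·p + r_t` with `r_t ∈ [1,p]`. -/
def qF (p t : ℕ) : ℕ := (t - 1) / p

/-- For `t ≥ 1`, the remainder `r_t ∈ [1,p]` in the division `t = q_t·p + r_t`. -/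
def rF (p t : ℕ) : ℕ := (t - 1) % p + 1

/-- `g_t = q_t·m_p + m_{r_t}` for `t ≥ 1`, and `g_0 = 0`. -/
def gF (p : ℕ) (m : ℕ → ℕ) (t : ℕ) : ℕ :=
  if t = 0 then 0 else qF p t * m p + m (rF p t)

/-- The set of non-negative integer combinations `Σ_{i=0}^{k} a_i·m_i`. -/
def gammaGen (k : ℕ) (m : ℕ → ℕ) : Set ℕ :=
  {x | ∃ a : ℕ → ℕ, x = ∑ i ∈ Finset.range (k + 1), a i * m i}

/-!
For `t ≥ 1` one has `g_t = (q_t + 1)·m_0 + t·c`, and `q_{a+b}` is `q_a + q_b` or `q_a + q_b + 1`;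
hence `g_a + g_b = g_{a+b} + e·m_0` with `e ∈ {0, 1}`. With this, the relations
`g_u = λ·m_0 + w·m_n` and `υ·m_n = μ·m_0 + g_z` rewrite `h·m_0 + g_t + d·m_n` either with `t`
lowered by `u` (and `d` raised by `w`), or, when `t ≥ u - z` and `d ≥ υ - w`, with `t` lowered by
`u - z` (and `d` lowered by `υ - w`). Since `λ ≥ 1` pays for the possible loss of one `m_0`, the
coefficient of `m_0` never decreases; as `t` decreases strictly, the rewriting stops at a pair
`(s, d) ∈ V ∖ W`.
-/

theorem Nat.add_add_one_div_le (x y : ℕ) {p : ℕ} (hp : 0 < p) :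
    (x + y + 1) / p ≤ x / p + y / p + 1 := by
  have hx := Nat.lt_mul_div_succ x hp
  have hy := Nat.lt_mul_div_succ y hp
  rw [Nat.le_iff_lt_add_one, Nat.div_lt_iff_lt_mul hp]
  nlinarith

section Generators

variable {p : ℕ} {m : ℕ → ℕ} {c : ℕ}

theorem qF_mul_add_rF {t : ℕ} (ht : 1 ≤ t) : qF p t * p + rF p t = t := by
  have := Nat.div_add_mod' (t - 1) p
  unfold qF rF
  omega

theorem rF_le (hp : 0 < p) (t : ℕ) : rF p t ≤ p :=
  Nat.mod_lt (t - 1) hp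

theorem qF_add_mem_Icc (hp : 0 < p) {a b : ℕ} (ha : 1 ≤ a) (hb : 1 ≤ b) :
    qF p (a + b) ∈ Set.Icc (qF p a + qF p b) (qF p a + qF p b + 1) := by
  have hab : a + b - 1 = (a - 1) + (b - 1) + 1 := by omega
  unfold qF
  rw [hab]
  exact ⟨Nat.div_add_div_le_add_div.trans (Nat.div_le_div_right (Nat.le_succ _)),
    Nat.add_add_one_div_le _ _ hp⟩

theorem gF_of_le {t : ℕ} (ht : 1 ≤ t) (htp : t ≤ p) : gF p m t = m t := by
  unfold gF qF rF
  rw [if_neg (by omega), Nat.div_eq_of_lt (by omega), Nat.mod_eq_of_lt (by omega),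
    Nat.sub_add_cancel ht, zero_mul, zero_add]

theorem gF_eq (hp : 0 < p) (harith : ∀ i ≤ p, m i = m 0 + i * c) {t : ℕ} (ht : 1 ≤ t) :
    gF p m t = (qF p t + 1) * m 0 + t * c := by
  have hdiv := qF_mul_add_rF (p := p) ht
  unfold gF
  rw [if_neg (by omega), harith p le_rfl, harith _ (rF_le hp t)]
  generalize qF p t = q, rF p t = r at hdiv ⊢
  subst hdiv
  ring

theorem gF_add (hp : 0 < p) (harith : ∀ i ≤ p, m i = m 0 + i * c) (a b : ℕ) (ha : 1 ≤ a) :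
    ∃ e ≤ 1, gF p m a + gF p m b = gF p m (a + b) + e * m 0 := by
  rcases b.eq_zero_or_pos with rfl | hb
  · exact ⟨0, zero_le_one, by simp [gF]⟩
  obtain ⟨hlo, hhi⟩ := qF_add_mem_Icc hp ha hb
  refine ⟨qF p a + qF p b + 1 - qF p (a + b), by omega, ?_⟩
  rw [gF_eq hp harith ha, gF_eq hp harith hb, gF_eq hp harith (by omega)]
  zify [hhi]
  ring

end Generators

section Reduction

variable {g : ℕ → ℕ} {m₀ mₙ u v w z lam mu : ℕ}

theorem exists_le_eq_sub_of_le (hg : ∀ a b, 1 ≤ a → ∃ e ≤ 1, g a + g b = g (a + b) + e * m₀)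
    (hlam : 1 ≤ lam) (hgu : g u = lam * m₀ + w * mₙ) (hu : 1 ≤ u) {t : ℕ} (ht : u ≤ t)
    (a b : ℕ) :
    ∃ h, a ≤ h ∧ a * m₀ + g t + b * mₙ = h * m₀ + g (t - u) + (b + w) * mₙ := by
  obtain ⟨e, he, hadd⟩ := hg u (t - u) hu
  rw [Nat.add_sub_cancel' ht] at hadd
  refine ⟨a + lam - e, by omega, ?_⟩
  zify [show e ≤ a + lam by omega] at hadd hgu ⊢
  linear_combination hgu - hadd

/-- Absorbing `v·mₙ = mu·m₀ + g z` turns `g t` into `g (t + z)`, and then `t + z ≥ u` is lowered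
by `u` as above. -/
theorem exists_le_eq_sub_of_le_of_le
    (hg : ∀ a b, 1 ≤ a → ∃ e ≤ 1, g a + g b = g (a + b) + e * m₀)
    (hlam : 1 ≤ lam) (hgu : g u = lam * m₀ + w * mₙ) (hvmn : v * mₙ = mu * m₀ + g z)
    (hzu : z < u) {t b : ℕ} (ht : u - z ≤ t) (hb : v ≤ b + w) (a : ℕ) :
    ∃ h, a ≤ h ∧ a * m₀ + g t + b * mₙ = h * m₀ + g (t - (u - z)) + (b + w - v) * mₙ := by
  obtain ⟨e, -, hadd⟩ := hg t z (by omega)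
  obtain ⟨h, hh, heq⟩ :=
    exists_le_eq_sub_of_le hg hlam hgu (by omega) (t := t + z) (by omega) (a + mu + e) (b + w - v)
  refine ⟨h, by omega, ?_⟩
  rw [show t + z - u = t - (u - z) by omega] at heq
  zify [hb] at hadd hvmn heq ⊢
  linear_combination heq + hadd + hvmn

theorem exists_reduced (hg : ∀ a b, 1 ≤ a → ∃ e ≤ 1, g a + g b = g (a + b) + e * m₀)
    (hlam : 1 ≤ lam) (hgu : g u = lam * m₀ + w * mₙ) (hvmn : v * mₙ = mu * m₀ + g z)
    (hzu : z < u) (hwv : w < v) (t a b : ℕ) (hb : b < v) :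
    ∃ h s d, a ≤ h ∧ s < u ∧ d < v ∧ ¬(u - z ≤ s ∧ v - w ≤ d) ∧
      a * m₀ + g t + b * mₙ = h * m₀ + g s + d * mₙ := by
  induction t using Nat.strong_induction_on generalizing a b with
  | _ t ih =>
  by_cases htb : u - z ≤ t ∧ v ≤ b + w
  · obtain ⟨h', hh', heq'⟩ :=
      exists_le_eq_sub_of_le_of_le hg hlam hgu hvmn hzu htb.1 htb.2 a
    obtain ⟨h, s, d, hh, hs, hd, hsd, heq⟩ := ih (t - (u - z)) (by omega) h' (b + w - v) (by omega)
    exact ⟨h, s, d, hh'.trans hh, hs, hd, hsd, heq'.trans heq⟩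
  by_cases hut : u ≤ t
  · obtain ⟨h', hh', heq'⟩ := exists_le_eq_sub_of_le hg hlam hgu (by omega) hut a b
    obtain ⟨h, s, d, hh, hs, hd, hsd, heq⟩ := ih (t - u) (by omega) h' (b + w) (by omega)
    exact ⟨h, s, d, hh'.trans hh, hs, hd, hsd, heq'.trans heq⟩
  exact ⟨a, t, b, le_rfl, by omega, hb, by omega, rfl⟩

end Reduction

theorem stmt7_general
    (p n : ℕ) (hp : 1 ≤ p)
    (m : ℕ → ℕ) (c : ℕ)
    (harith : ∀ i ≤ p, m i = m 0 + i * c)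
    (u : ℕ)
    (v : ℕ)
    (lam w mu z : ℕ) (hlam : 1 ≤ lam) (hw : w < v) (hz : z < u)
    (hgu : gF p m u = lam * m 0 + w * m n)
    (hvmn : v * m n = mu * m 0 + gF p m z)
    (V W : Set (ℕ × ℕ))
    (hV : V = {sb | sb.1 < u ∧ sb.2 < v})
    (hW : W = {sb | u - z ≤ sb.1 ∧ sb.1 < u ∧ v - w ≤ sb.2 ∧ sb.2 < v})
    (h1 s1 d1 : ℕ) (hs1 : 1 ≤ s1 ∧ s1 ≤ p) (hd1 : d1 < v) :
    ∃ h s d : ℕ, h1 ≤ h ∧ (s, d) ∈ V \ W ∧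
      h1 * m 0 + m s1 + d1 * m n = h * m 0 + gF p m s + d * m n := by
  obtain ⟨h, s, d, hh, hs, hd, hsd, heq⟩ :=
    exists_reduced (gF_add hp harith) hlam hgu hvmn hz hw s1 h1 d1 hd1
  rw [gF_of_le hs1.1 hs1.2] at heq
  subst hV hW
  exact ⟨h, s, d, hh, ⟨⟨hs, hd⟩, fun hmem => hsd ⟨hmem.1, hmem.2.2.1⟩⟩, heq⟩

/-- Lemma on reducing `x_0^{h_1} x_{s_1} x_n^{d_1}` when `W ≠ ∅` and `q' = 0`:
there exist `h ≥ h_1` and `(s,d) ∈ V∖W` with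
`h_1·m_0 + m_{s_1} + d_1·m_n = h·m_0 + g_s + d·m_n`. -/
theorem stmt7
    (p n : ℕ) (hp : 1 ≤ p) (hn : n = p + 1)
    (m : ℕ → ℕ) (c : ℕ) (hc : 1 ≤ c) (hm0 : 0 < m 0)
    (harith : ∀ i ≤ p, m i = m 0 + i * c) (hmn : 0 < m n)
    (hgcd : Finset.gcd (Finset.range (n + 1)) m = 1)
    (hminimal : ∀ j ≤ n, ¬ ∃ a : ℕ → ℕ, a j = 0 ∧
        m j = ∑ i ∈ Finset.range (n + 1), a i * m i)
    (S : Set ℕ)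
    (hS : S = {γ | γ ∈ gammaGen n m ∧ ∀ δ ∈ gammaGen n m, δ + m 0 ≠ γ})
    (u : ℕ) (hu : IsLeast {t : ℕ | gF p m t ∉ S} u)
    (v : ℕ) (hv : IsLeast {b : ℕ | 1 ≤ b ∧ b * m n ∈ gammaGen p m} v)
    (lam w mu z : ℕ) (hlam : 1 ≤ lam) (hw : w < v) (hz : z < u)
    (hgu : gF p m u = lam * m 0 + w * m n)
    (hvmn : v * m n = mu * m 0 + gF p m z)
    (V W : Set (ℕ × ℕ))
    (hV : V = {sb | sb.1 < u ∧ sb.2 < v})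
    (hW : W = {sb | u - z ≤ sb.1 ∧ sb.1 < u ∧ v - w ≤ sb.2 ∧ sb.2 < v})
    (q' r' : ℕ) (hq'r' : u - z = q' * p + r') (hr' : 1 ≤ r' ∧ r' ≤ p)
    (hz1 : 1 ≤ z) (hw1 : 1 ≤ w) (hq'0 : q' = 0)
    (h1 s1 d1 : ℕ) (hs1 : 1 ≤ s1 ∧ s1 ≤ p) (hd1 : d1 < v) :
    ∃ h s d : ℕ, h1 ≤ h ∧ (s, d) ∈ V \ W ∧
      h1 * m 0 + m s1 + d1 * m n = h * m 0 + gF p m s + d * m n :=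
  stmt7_general p n hp m c harith u v lam w mu z hlam hw hz hgu hvmn V W hV hW h1 s1 d1 hs1 hd1
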